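/- arXiv:2304.08627 — 4 statements merged into one kernel-verified Lean document; each statement's English description precedes it below -/
import Mathlib

section
/- Let R be a (not necessarily commutative) ring and (A_k)_{k≥1} a sequence in R. Define B_0 = 1 and, for n ≥ 1, B_n = Σ_{q=1}^{n} (−1)^q Σ_{(k_1,…,k_q)} A_{k_1} A_{k_2} ⋯ A_{k_q}, where the inner sum runs over all compositions (k_1,…,k_q) of n into q positive parts (k_1+⋯+k_q = n, each k_j ≥ 1), the product taken in the indicated order. Then for every n ≥ 1 one has B_n + Σ_{k=1}^{n} A_k B_{n−k} = 0 and B_n + Σ_{k=1}^{n} B_{n−k} A_k = 0; that is, the sequence (B_n) gives the two-sided coefficientwise inverse of the series 1 + Σ_{k≥1} A_k λ^k. -/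
/-!
Put `a = Σ_{k ≥ 1} A_k X^k` in `R⟦X⟧`. Expanding `a^q` coefficientwise (keeping the order of the
factors), the coefficient of `X^n` is the sum over compositions of `n` into `q` parts, and it
vanishes for `q > n` because `X ∣ a`. Hence for `m ≤ n` the number `B_m` is the coefficient of `X^m`
in the truncated geometric series `P = Σ_{q ≤ n} (-a)^q`. Finally
`(1 + a) P = P (1 + a) = 1 - (-a)^(n+1)`, whose coefficient of `X^n` is `0` when `n ≥ 1`.
-/

open Finset PowerSeries

theorem Finset.Nat.sum_antidiagonalTuple_succ {M : Type*} [AddCommMonoid M] (q n : ℕ)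
    (f : (Fin (q + 1) → ℕ) → M) :
    ∑ k ∈ Nat.antidiagonalTuple (q + 1) n, f k =
      ∑ p ∈ antidiagonal n, ∑ k ∈ Nat.antidiagonalTuple q p.2, f (Fin.cons p.1 k) := by
  rw [sum_sigma']
  refine sum_nbij' (fun k => ⟨(k 0, ∑ j : Fin q, k j.succ), Fin.tail k⟩)
    (fun p => Fin.cons p.1.1 p.2) ?_ ?_ ?_ ?_ ?_
  · intro k hk
    simp_all [Nat.mem_antidiagonalTuple, Fin.sum_univ_succ, Fin.tail]
  · rintro ⟨⟨i, j⟩, k⟩ hk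
    simp_all [Nat.mem_antidiagonalTuple, Fin.sum_univ_succ]
  · intro k _
    exact Fin.cons_self_tail k
  · rintro ⟨⟨i, j⟩, k⟩ hk
    simp_all [Nat.mem_antidiagonalTuple]
  · intro k _
    rw [Fin.cons_self_tail]

namespace PowerSeries

variable {R : Type*}

section Semiring

variable [Semiring R]

theorem coeff_pow_eq_sum_antidiagonalTuple (f : R⟦X⟧) (q n : ℕ) :
    coeff n (f ^ q) =
      ∑ k ∈ Finset.Nat.antidiagonalTuple q n, (List.ofFn fun j => coeff (k j) f).prod := by
  induction q generalizing n with
  | zero => cases n <;> simp [coeff_one]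
  | succ q ih =>
    simp only [pow_succ', coeff_mul, Finset.Nat.sum_antidiagonalTuple_succ, ih, mul_sum,
      List.ofFn_succ, List.prod_cons, Fin.cons_zero, Fin.cons_succ]

theorem coeff_pow_eq_zero_of_lt {f : R⟦X⟧} (hf : constantCoeff f = 0) {q n : ℕ} (h : n < q) :
    coeff n (f ^ q) = 0 := by
  obtain ⟨g, rfl⟩ := X_dvd_iff.mpr hf
  rw [(commute_X g).symm.mul_pow, coeff_X_pow_mul', if_neg (by omega)]

theorem coeff_pow_eq_sum_compositions {f : R⟦X⟧} (hf : constantCoeff f = 0) (q n : ℕ) :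
    coeff n (f ^ q) =
      ∑ k ∈ univ.filter (fun k : Fin q → Fin (n + 1) =>
          (∀ j, 1 ≤ (k j : ℕ)) ∧ ∑ j, (k j : ℕ) = n),
        (List.ofFn fun j => coeff (k j : ℕ) f).prod := by
  rw [coeff_pow_eq_sum_antidiagonalTuple,
    ← sum_filter_of_ne (p := fun k : Fin q → ℕ => ∀ j, 1 ≤ k j)]
  swap
  · intro k _ hprod j
    by_contra! hj
    refine hprod (List.prod_eq_zero (List.mem_ofFn.mpr ⟨j, ?_⟩))
    rw [Nat.lt_one_iff.mp hj, coeff_zero_eq_constantCoeff_apply, hf]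
  symm
  refine sum_bij (fun k _ j => (k j : ℕ)) ?_ ?_ ?_ (fun _ _ => rfl)
  · intro k hk
    simp_all [Nat.mem_antidiagonalTuple]
  · intro k₁ _ k₂ _ h
    funext j
    exact Fin.ext (congrFun h j)
  · intro k hk
    simp only [mem_filter, Nat.mem_antidiagonalTuple] at hk
    have hle : ∀ j, k j ≤ n := fun j =>
      hk.1 ▸ single_le_sum (fun i _ => Nat.zero_le (k i)) (mem_univ j)
    exact ⟨fun j => ⟨k j, Nat.lt_succ_of_le (hle j)⟩, by simpa using hk.symm, rfl⟩

theorem coeff_mul_eq_add_sum_Icc (f g : R⟦X⟧) (n : ℕ) :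
    coeff n (f * g) = coeff 0 f * coeff n g + ∑ k ∈ Icc 1 n, coeff k f * coeff (n - k) g := by
  rw [coeff_mul, Finset.Nat.sum_antidiagonal_eq_sum_range_succ (fun i j => coeff i f * coeff j g),
    range_eq_Ico, sum_eq_sum_Ico_succ_bot n.succ_pos, zero_add, Nat.succ_eq_add_one,
    Ico_add_one_right_eq_Icc, Nat.sub_zero]

theorem coeff_mul_eq_add_sum_Icc' (f g : R⟦X⟧) (n : ℕ) :
    coeff n (f * g) = coeff n f * coeff 0 g + ∑ k ∈ Icc 1 n, coeff (n - k) f * coeff k g := by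
  rw [coeff_mul, ← Finset.Nat.sum_antidiagonal_swap]
  simp only [Prod.fst_swap, Prod.snd_swap]
  rw [Finset.Nat.sum_antidiagonal_eq_sum_range_succ (fun i j => coeff j f * coeff i g),
    range_eq_Ico, sum_eq_sum_Ico_succ_bot n.succ_pos, zero_add, Nat.succ_eq_add_one,
    Ico_add_one_right_eq_Icc, Nat.sub_zero]

end Semiring

section Ring

variable [Ring R]

theorem coeff_neg_pow (f : R⟦X⟧) (q n : ℕ) : coeff n ((-f) ^ q) = (-1) ^ q * coeff n (f ^ q) := by
  rw [neg_pow, ← coeff_C_mul, map_pow, map_neg, map_one]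

theorem constantCoeff_sum_range_neg_pow {f : R⟦X⟧} (hf : constantCoeff f = 0) (N : ℕ) :
    constantCoeff (∑ q ∈ range (N + 1), (-f) ^ q) = 1 := by
  simp [hf, sum_range_succ']

theorem coeff_sum_range_neg_pow {f : R⟦X⟧} (hf : constantCoeff f = 0) {m N : ℕ} (hm : 1 ≤ m)
    (hmN : m ≤ N) :
    coeff m (∑ q ∈ range (N + 1), (-f) ^ q) = ∑ q ∈ Icc 1 m, (-1) ^ q * coeff m (f ^ q) := by
  have hsub : Icc 1 m ⊆ range (N + 1) := fun q hq =>
    mem_range.mpr (Nat.lt_succ_of_le ((mem_Icc.mp hq).2.trans hmN))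
  rw [map_sum, ← sum_subset hsub]
  · exact sum_congr rfl fun q _ => coeff_neg_pow f q m
  · intro q _ hq
    rw [coeff_neg_pow]
    rcases Nat.eq_zero_or_pos q with rfl | hq0
    · simp [coeff_one, Nat.one_le_iff_ne_zero.mp hm]
    · rw [coeff_pow_eq_zero_of_lt hf (by rw [mem_Icc] at hq; omega), mul_zero]

theorem coeff_one_add_mul_sum_range_neg_pow {f : R⟦X⟧} (hf : constantCoeff f = 0) {n : ℕ}
    (hn : 1 ≤ n) :
    coeff n ((1 + f) * ∑ q ∈ range (n + 1), (-f) ^ q) = 0 := by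
  rw [← sub_neg_eq_add, mul_neg_geom_sum, map_sub, coeff_one, if_neg (by omega),
    coeff_pow_eq_zero_of_lt (by simp [hf]) n.lt_succ_self, sub_zero]

theorem coeff_sum_range_neg_pow_mul_one_add {f : R⟦X⟧} (hf : constantCoeff f = 0) {n : ℕ}
    (hn : 1 ≤ n) :
    coeff n ((∑ q ∈ range (n + 1), (-f) ^ q) * (1 + f)) = 0 := by
  rw [← sub_neg_eq_add, geom_sum_mul_neg, map_sub, coeff_one, if_neg (by omega),
    coeff_pow_eq_zero_of_lt (by simp [hf]) n.lt_succ_self, sub_zero]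

end Ring

end PowerSeries

/-- The coefficientwise (two-sided) inverse of the formal series
`1 + Σ_{k≥1} A_k λ^k` in a (not necessarily commutative) ring is given by
`B_0 = 1`, `B_n = Σ_{q=1}^n (-1)^q Σ_{compositions (k_1,…,k_q) of n} A_{k_1}⋯A_{k_q}`. -/
theorem stmt0 (R : Type*) [Ring R] (A : ℕ → R) (B : ℕ → R)
    (hB0 : B 0 = 1)
    (hBn : ∀ n, 1 ≤ n → B n =
      ∑ q ∈ Finset.Icc 1 n, (-1 : R) ^ q *
        ∑ k ∈ Finset.univ.filter
            (fun k : Fin q → Fin (n + 1) =>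
              (∀ j, 1 ≤ (k j : ℕ)) ∧ ∑ j, (k j : ℕ) = n),
          (List.ofFn (fun j => A ((k j : ℕ)))).prod) :
    ∀ n, 1 ≤ n →
      B n + ∑ k ∈ Finset.Icc 1 n, A k * B (n - k) = 0 ∧
      B n + ∑ k ∈ Finset.Icc 1 n, B (n - k) * A k = 0 := by
  intro n hn
  set a : R⟦X⟧ := mk fun k => if k = 0 then 0 else A k
  have ha0 : constantCoeff a = 0 := by simp [a]
  have ha : ∀ k, 1 ≤ k → coeff k a = A k := fun k hk => by
    simp [a, Nat.one_le_iff_ne_zero.mp hk]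
  have hu0 : coeff 0 (1 + a) = 1 := by simp [ha0]
  have hu : ∀ k, 1 ≤ k → coeff k (1 + a) = A k := fun k hk => by
    rw [map_add, coeff_one, if_neg (by omega), zero_add, ha k hk]
  set P := ∑ q ∈ range (n + 1), (-a) ^ q
  have hP : ∀ m ≤ n, coeff m P = B m := by
    intro m hm
    rcases Nat.eq_zero_or_pos m with rfl | hm0
    · rw [hB0, coeff_zero_eq_constantCoeff_apply, constantCoeff_sum_range_neg_pow ha0]
    rw [coeff_sum_range_neg_pow ha0 hm0 hm, hBn m hm0]
    refine sum_congr rfl fun q _ => congrArg _ ?_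
    rw [coeff_pow_eq_sum_compositions ha0]
    refine sum_congr rfl fun k hk => ?_
    simp only [ha _ ((mem_filter.mp hk).2.1 _)]
  constructor
  · rw [← coeff_one_add_mul_sum_range_neg_pow ha0 hn, coeff_mul_eq_add_sum_Icc, hu0, one_mul,
      hP n le_rfl]
    refine congrArg _ (sum_congr rfl fun k hk => ?_)
    rw [hu k (mem_Icc.mp hk).1, hP _ (Nat.sub_le n k)]
  · rw [← coeff_sum_range_neg_pow_mul_one_add ha0 hn, coeff_mul_eq_add_sum_Icc', hu0, mul_one,
      hP n le_rfl]
    refine congrArg _ (sum_congr rfl fun k hk => ?_)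
    rw [hu k (mem_Icc.mp hk).1, hP _ (Nat.sub_le n k)]
end

section
/- Let k ≥ 1, let γ_1, …, γ_k be complex numbers such that for all indices 1 ≤ a ≤ b ≤ k the consecutive sum Σ_{i=a}^{b} γ_i is nonzero, and let t ∈ ℝ. Then the iterated time-ordered integral ∫_0^t dt_1 ∫_0^{t_1} dt_2 ⋯ ∫_0^{t_{k−1}} dt_k exp(−Σ_{j=1}^{k} γ_j t_j) equals 1/(∏_{n=1}^{k} Σ_{j=1}^{n} γ_j) + Σ_{p=1}^{k} (−1)^p exp(−t Σ_{i=1}^{p} γ_i) / [(∏_{m=1}^{p} Σ_{i=m}^{p} γ_i)·(∏_{n=p+1}^{k} Σ_{j=p+1}^{n} γ_j)], where empty products equal 1. -/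
/-!
Write `x_q = γ_1 + ⋯ + γ_q` (so `x_0 = 0`); the hypothesis says exactly that the nodes
`x_0, …, x_k` are distinct. The right-hand side is `(-1)^k ∑_{q=0}^k w_q e^{-t x_q}`, where
`w_q = ∏_{j ≠ q} (x_q - x_j)⁻¹` are the barycentric weights of these nodes. This is proved for
every list of increments by induction, peeling off the outermost integral: integrating
`e^{-s x_{q+1}}` over `[0, t]` yields the terms `q ≥ 1` plus a constant, and that constant is the
`q = 0` term because the weights of two or more distinct nodes sum to zero (compare leading
coefficients in `∑_q L_q = 1` for the Lagrange basis `L_q`).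
-/

open MeasureTheory

/-- The nested (iterated) time-ordered integral
`∫_0^t dt_1 ∫_0^{t_1} dt_2 ⋯ ∫_0^{t_{k-1}} dt_k exp(-Σ_j γ_j t_j)`,
written as nested one-dimensional integrals (the exponential factorizes). -/
noncomputable def nestedInt : List ℂ → ℝ → ℂ
  | [], _ => 1
  | g :: gs, t => ∫ s in (0:ℝ)..t, Complex.exp (-g * (s : ℂ)) * nestedInt gs s

open Finset

-- named explicitly: the automatic name would turn `one` into `zero`
@[to_additive sum_Icc_one_eq_sum_range]
theorem prod_Icc_one_eq_prod_range {M : Type*} [CommMonoid M] (f : ℕ → M) (n : ℕ) :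
    ∏ i ∈ Icc 1 n, f i = ∏ i ∈ range n, f (i + 1) := by
  rw [range_eq_Ico, prod_Ico_add', ← Ico_add_one_right_eq_Icc]

section PartialSums

variable {M : Type*} [AddCommGroup M]

theorem sum_Icc_one_sub_sum_Icc_one (f : ℕ → M) {m q : ℕ} (h : m ≤ q) :
    ∑ i ∈ Icc 1 q, f i - ∑ i ∈ Icc 1 m, f i = ∑ i ∈ Icc (m + 1) q, f i := by
  have hIoc : ∀ n, Icc 1 n = Ioc 0 n := Icc_add_one_left_eq_Ioc 0
  rw [hIoc, hIoc, Icc_add_one_left_eq_Ioc, sub_eq_iff_eq_add',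
    sum_Ioc_consecutive f (Nat.zero_le m) h]

theorem injOn_sum_Icc_one {γ : ℕ → M} {k : ℕ}
    (hγ : ∀ a b, 1 ≤ a → a ≤ b → b ≤ k → ∑ i ∈ Icc a b, γ i ≠ 0) :
    Set.InjOn (fun q => ∑ i ∈ Icc 1 q, γ i) (range (k + 1)) := by
  have hlt : ∀ m q, m < q → q ≤ k → ∑ i ∈ Icc 1 q, γ i ≠ ∑ i ∈ Icc 1 m, γ i :=
    fun m q hmq hqk h => hγ (m + 1) q (by omega) hmq hqk
      (by rw [← sum_Icc_one_sub_sum_Icc_one γ hmq.le, h, sub_self])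
  intro m hm q hq h
  simp only [coe_range, Set.mem_Iio] at hm hq
  rcases lt_trichotomy m q with hmq | rfl | hqm
  · exact absurd h.symm (hlt m q hmq (by omega))
  · rfl
  · exact absurd h (hlt q m hqm (by omega))

end PartialSums

namespace Lagrange

variable {F : Type*} [Field F]

theorem sum_nodalWeight_eq_zero {ι : Type*} [DecidableEq ι] {s : Finset ι} {v : ι → F}
    (hvs : Set.InjOn v s) (hs : 2 ≤ #s) : ∑ i ∈ s, nodalWeight s v i = 0 := by
  have hcoeff : ∀ i ∈ s, (Lagrange.basis s v i).coeff (#s - 1) = nodalWeight s v i := by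
    intro i hi
    rw [basis_eq_prod_sub_inv_mul_nodal_div hi, ← nodal_erase_eq_nodal_div hi,
      Polynomial.coeff_C_mul, ← card_erase_of_mem hi, ← natDegree_nodal (v := v),
      nodal_monic.coeff_natDegree, mul_one]
  have h := congrArg (Polynomial.coeff · (#s - 1)) (sum_basis hvs (card_pos.mp (by omega)))
  simp only [Polynomial.finsetSum_coeff, Polynomial.coeff_one,
    if_neg (by omega : #s - 1 ≠ 0)] at h
  rwa [sum_congr rfl hcoeff] at h

theorem nodalWeight_congr {ι : Type*} [DecidableEq ι] {s : Finset ι} {v w : ι → F}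
    (hvw : Set.EqOn v w s) {i : ι} (hi : i ∈ s) : nodalWeight s v i = nodalWeight s w i :=
  prod_congr rfl fun j hj => by rw [hvw hi, hvw (mem_of_mem_erase hj)]

theorem nodalWeight_const_add {ι : Type*} [DecidableEq ι] (s : Finset ι) (v : ι → F) (c : F) :
    nodalWeight s (fun i => c + v i) = nodalWeight s v := by
  ext i
  simp only [nodalWeight, add_sub_add_left_eq_sub]

theorem nodalWeight_range_succ_succ (v : ℕ → F) (n q : ℕ) :
    nodalWeight (range (n + 1)) v (q + 1) =
      (v (q + 1) - v 0)⁻¹ * nodalWeight (range n) (fun i => v (i + 1)) q := by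
  have hset : (range (n + 1)).erase (q + 1) = insert 0 (((range n).erase q).image (· + 1)) := by
    ext i
    rcases i with _ | i <;> simp
  rw [nodalWeight, hset, prod_insert (by simp), prod_image (by simp)]
  rfl

theorem neg_one_pow_mul_nodalWeight_range (v : ℕ → F) {k q : ℕ} (hq : q ≤ k) :
    (-1) ^ k * nodalWeight (range (k + 1)) v q =
      (-1) ^ q * ((∏ m ∈ range q, (v q - v m)) * ∏ n ∈ Icc (q + 1) k, (v n - v q))⁻¹ := by
  have hsplit : (range (k + 1)).erase q = range q ∪ Icc (q + 1) k := by
    ext i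
    simp only [mem_erase, mem_range, mem_union, mem_Icc]
    omega
  have hdisj : Disjoint (range q) (Icc (q + 1) k) := by
    rw [disjoint_left]
    intro i
    simp only [mem_range, mem_Icc]
    omega
  have hflip : ∏ n ∈ Icc (q + 1) k, (v q - v n)⁻¹ =
      (-1) ^ (k - q) * ∏ n ∈ Icc (q + 1) k, (v n - v q)⁻¹ := by
    rw [show (-1 : F) ^ (k - q) = ∏ _n ∈ Icc (q + 1) k, (-1 : F) by
      rw [prod_const, Nat.card_Icc]; congr 1; omega, ← prod_mul_distrib]
    refine prod_congr rfl fun n _ => ?_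
    rw [← neg_sub, inv_neg, neg_one_mul]
  have hsign : (-1 : F) ^ k * (-1) ^ (k - q) = (-1) ^ q := by
    obtain ⟨d, rfl⟩ := Nat.exists_eq_add_of_le hq
    rw [Nat.add_sub_cancel_left, pow_add, mul_assoc, ← pow_add, ← two_mul, pow_mul, neg_one_sq,
      one_pow, mul_one]
  rw [nodalWeight, hsplit, prod_union hdisj, hflip, mul_inv, prod_inv_distrib, prod_inv_distrib,
    ← hsign]
  ring

theorem neg_one_pow_mul_sum_nodalWeight_range (v e : ℕ → F) (k : ℕ) :
    (-1) ^ k * ∑ q ∈ range (k + 1), nodalWeight (range (k + 1)) v q * e q =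
      e 0 * (∏ n ∈ Icc 1 k, (v n - v 0))⁻¹ +
      ∑ p ∈ Icc 1 k, (-1) ^ p * e p /
        ((∏ m ∈ range p, (v p - v m)) * ∏ n ∈ Icc (p + 1) k, (v n - v p)) := by
  have hterm : ∀ q ∈ range (k + 1), (-1) ^ k * (nodalWeight (range (k + 1)) v q * e q) =
      (-1) ^ q * e q / ((∏ m ∈ range q, (v q - v m)) * ∏ n ∈ Icc (q + 1) k, (v n - v q)) := by
    intro q hq
    rw [← mul_assoc, neg_one_pow_mul_nodalWeight_range v (Nat.lt_succ_iff.mp (mem_range.mp hq))]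
    ring
  rw [mul_sum, sum_congr rfl hterm, sum_range_succ', add_comm, sum_Icc_one_eq_sum_range, pow_zero,
    one_mul, prod_range_zero, one_mul, zero_add, div_eq_mul_inv]

end Lagrange

open Lagrange

def prefixSum {M : Type*} [AddMonoid M] (l : List M) (q : ℕ) : M := (l.take q).sum

@[simp]
theorem prefixSum_zero {M : Type*} [AddMonoid M] (l : List M) : prefixSum l 0 = 0 := by
  simp [prefixSum]

@[simp]
theorem prefixSum_cons_succ {M : Type*} [AddMonoid M] (a : M) (l : List M) (q : ℕ) :
    prefixSum (a :: l) (q + 1) = a + prefixSum l q := by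
  simp [prefixSum]

theorem prefixSum_map_range {M : Type*} [AddCommMonoid M] (f : ℕ → M) {n q : ℕ} (hq : q ≤ n) :
    prefixSum ((List.range n).map f) q = ∑ i ∈ range q, f i := by
  simp [prefixSum, ← List.map_take, List.take_range, min_eq_left hq, Finset.sum, Multiset.range]

theorem injOn_prefixSum_of_cons {M : Type*} [AddLeftCancelMonoid M] {a : M} {l : List M}
    (h : Set.InjOn (prefixSum (a :: l)) (range (l.length + 2))) :
    Set.InjOn (prefixSum l) (range (l.length + 1)) := by
  intro i hi j hj hij
  have := @h (i + 1) (by simpa using hi) (j + 1) (by simpa using hj)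
    (by rw [prefixSum_cons_succ, prefixSum_cons_succ, hij])
  omega

theorem nodalWeight_prefixSum_cons_succ {F : Type*} [Field F] (a : F) (l : List F) (n q : ℕ) :
    nodalWeight (range (n + 1)) (prefixSum (a :: l)) (q + 1) =
      (prefixSum (a :: l) (q + 1))⁻¹ * nodalWeight (range n) (prefixSum l) q := by
  rw [nodalWeight_range_succ_succ, prefixSum_zero, sub_zero]
  simp only [prefixSum_cons_succ, nodalWeight_const_add]

theorem integral_exp_neg_mul_complex {c : ℂ} (hc : c ≠ 0) (t : ℝ) :
    ∫ s in (0 : ℝ)..t, Complex.exp (-s * c) = (1 - Complex.exp (-t * c)) / c := by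
  have hcomm : ∀ u : ℝ, -(u : ℂ) * c = -c * u := fun u => by ring
  simp_rw [hcomm]
  rw [integral_exp_mul_complex (neg_ne_zero.mpr hc), Complex.ofReal_zero, mul_zero,
    Complex.exp_zero, div_neg, ← neg_div, neg_sub]

theorem integral_sum_mul_exp_neg_mul {ι : Type*} {s : Finset ι} (a c : ι → ℂ)
    (hc : ∀ i ∈ s, c i ≠ 0) (t : ℝ) :
    ∫ u in (0 : ℝ)..t, ∑ i ∈ s, a i * Complex.exp (-u * c i) =
      ∑ i ∈ s, a i * ((1 - Complex.exp (-t * c i)) / c i) := by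
  rw [intervalIntegral.integral_finsetSum fun i _ =>
    (by fun_prop : Continuous _).intervalIntegrable _ _]
  refine sum_congr rfl fun i hi => ?_
  rw [intervalIntegral.integral_const_mul, integral_exp_neg_mul_complex (hc i hi)]

theorem nestedInt_eq_sum_nodalWeight (g : List ℂ)
    (hg : Set.InjOn (prefixSum g) (range (g.length + 1))) (t : ℝ) :
    nestedInt g t = (-1) ^ g.length * ∑ q ∈ range (g.length + 1),
      nodalWeight (range (g.length + 1)) (prefixSum g) q * Complex.exp (-t * prefixSum g q) := by
  induction g generalizing t with
  | nil => simp [nestedInt, nodalWeight]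
  | cons a l ih =>
    rw [List.length_cons] at hg ⊢
    have hnode_ne : ∀ q ∈ range (l.length + 1), prefixSum (a :: l) (q + 1) ≠ 0 := fun q hq h =>
      q.succ_ne_zero (hg (by simpa using hq) (by simp) (by rw [h, prefixSum_zero]))
    have hintegrand : ∀ s : ℝ, Complex.exp (-a * s) * nestedInt l s =
        (-1) ^ l.length * ∑ q ∈ range (l.length + 1), nodalWeight (range (l.length + 1))
          (prefixSum l) q * Complex.exp (-s * prefixSum (a :: l) (q + 1)) := by
      intro s
      rw [ih (injOn_prefixSum_of_cons hg), mul_left_comm, mul_sum]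
      congr 1
      refine sum_congr rfl fun q _ => ?_
      rw [prefixSum_cons_succ, mul_add, Complex.exp_add]
      ring_nf
    have hweights := sum_nodalWeight_eq_zero hg (by simp)
    rw [sum_range_succ'] at hweights
    simp only [nodalWeight_prefixSum_cons_succ] at hweights
    rw [nestedInt, intervalIntegral.integral_congr fun s _ => hintegrand s,
      intervalIntegral.integral_const_mul, integral_sum_mul_exp_neg_mul _ _ hnode_ne,
      sum_range_succ' _ (l.length + 1)]
    simp only [nodalWeight_prefixSum_cons_succ, prefixSum_zero, mul_zero, Complex.exp_zero, mul_one]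
    generalize nodalWeight (range (l.length + 1)) (prefixSum l) = w at hweights ⊢
    generalize prefixSum (a :: l) = S at hweights ⊢
    have hsplit : ∀ i, w i * ((1 - Complex.exp (-t * S (i + 1))) / S (i + 1)) =
        (S (i + 1))⁻¹ * w i - (S (i + 1))⁻¹ * w i * Complex.exp (-t * S (i + 1)) := fun i => by
      ring
    rw [sum_congr rfl fun i _ => hsplit i, sum_sub_distrib]
    linear_combination (-1) ^ l.length * hweights


theorem stmt1_general (k : ℕ) (γ : ℕ → ℂ)
    (hγ : ∀ a b, 1 ≤ a → a ≤ b → b ≤ k → ∑ i ∈ Finset.Icc a b, γ i ≠ 0)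
    (t : ℝ) :
    nestedInt ((List.range k).map fun j => γ (j + 1)) t =
      (∏ n ∈ Finset.Icc 1 k, ∑ j ∈ Finset.Icc 1 n, γ j)⁻¹ +
      ∑ p ∈ Finset.Icc 1 k, (-1 : ℂ) ^ p *
        Complex.exp (-(t : ℂ) * ∑ i ∈ Finset.Icc 1 p, γ i) /
        ((∏ m ∈ Finset.Icc 1 p, ∑ i ∈ Finset.Icc m p, γ i) *
         (∏ n ∈ Finset.Icc (p + 1) k, ∑ j ∈ Finset.Icc (p + 1) n, γ j)) := by
  set g := (List.range k).map fun j => γ (j + 1)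
  set x : ℕ → ℂ := fun q => ∑ i ∈ Icc 1 q, γ i
  have hgx : Set.EqOn x (prefixSum g) (range (k + 1)) := fun q hq => by
    rw [prefixSum_map_range _ (Nat.lt_succ_iff.mp (mem_range.mp hq)), ← sum_Icc_one_eq_sum_range]
  have hlen : g.length = k := by simp [g]
  have hnodes : ∑ q ∈ range (k + 1), nodalWeight (range (k + 1)) (prefixSum g) q *
      Complex.exp (-t * prefixSum g q) =
      ∑ q ∈ range (k + 1), nodalWeight (range (k + 1)) x q * Complex.exp (-t * x q) :=
    sum_congr rfl fun q hq => by rw [nodalWeight_congr hgx hq, hgx hq]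
  rw [nestedInt_eq_sum_nodalWeight g (hlen ▸ (injOn_sum_Icc_one hγ).congr hgx), hlen, hnodes,
    neg_one_pow_mul_sum_nodalWeight_range]
  congr 1
  · simp [x]
  · refine sum_congr rfl fun p _ => ?_
    rw [prod_Icc_one_eq_prod_range]
    congr 2
    · exact prod_congr rfl fun m hm => sum_Icc_one_sub_sum_Icc_one γ (mem_range.mp hm).le
    · exact prod_congr rfl fun n hn =>
        sum_Icc_one_sub_sum_Icc_one γ (Nat.le_of_succ_le (mem_Icc.mp hn).1)

/-- explicit value of the iterated time-ordered integral of
`exp(-Σ_{j=1}^k γ_j t_j)` over the simplex `0 ≤ t_k ≤ ⋯ ≤ t_1 ≤ t`, provided all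
consecutive sums `Σ_{i=a}^b γ_i` (for `1 ≤ a ≤ b ≤ k`) are nonzero. -/
theorem stmt1 (k : ℕ) (hk : 1 ≤ k) (γ : ℕ → ℂ)
    (hγ : ∀ a b, 1 ≤ a → a ≤ b → b ≤ k → ∑ i ∈ Finset.Icc a b, γ i ≠ 0)
    (t : ℝ) :
    nestedInt ((List.range k).map fun j => γ (j + 1)) t =
      (∏ n ∈ Finset.Icc 1 k, ∑ j ∈ Finset.Icc 1 n, γ j)⁻¹ +
      ∑ p ∈ Finset.Icc 1 k, (-1 : ℂ) ^ p *
        Complex.exp (-(t : ℂ) * ∑ i ∈ Finset.Icc 1 p, γ i) /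
        ((∏ m ∈ Finset.Icc 1 p, ∑ i ∈ Finset.Icc m p, γ i) *
         (∏ n ∈ Finset.Icc (p + 1) k, ∑ j ∈ Finset.Icc (p + 1) n, γ j)) :=
  stmt1_general k γ hγ t
end

section
/- Let E be the Banach algebra of continuous ℂ-linear endomorphisms of the space of n×n complex matrices. Let 𝓛 : ℝ → E be continuous, λ ∈ ℝ, t_0 ∈ ℝ, and let U : ℝ → E satisfy U(t_0) = 1 and, for every t, U has derivative λ·𝓛(t)∘U(t) at t. Let P ∈ E be idempotent (P∘P = P) and set Q := 1 − P. Fix t ∈ ℝ and suppose G ∈ E satisfies G∘(P∘U(t)∘P) = P, G∘Q = 0, and Q∘G = 0. Define K := λ·(P∘𝓛(t)∘U(t)∘P)∘G and I := λ·P∘𝓛(t)∘U(t)∘Q − K∘(P∘U(t)∘Q). Then λ·P∘𝓛(t)∘U(t) = K∘(P∘U(t)) + I∘Q; consequently, for any n×n complex matrix ρ_0, the function s ↦ P(U(s)ρ_0) has derivative K(P(U(t)ρ_0)) + I(Q ρ_0) at s = t. -/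
attribute [local instance] Matrix.linftyOpNormedAddCommGroup Matrix.linftyOpNormedSpace

noncomputable instance matrixLinftyOpTopology (n : ℕ) : TopologicalSpace (Matrix (Fin n) (Fin n) ℂ) :=
  (Matrix.linftyOpNormedAddCommGroup : NormedAddCommGroup (Matrix (Fin n) (Fin n) ℂ)).toUniformSpace.toTopologicalSpace

/-!
Splitting `1 = P + Q`, the generator `K = A P G` reproduces `A P` on the relevant part because
`G` inverts `P V P` from the left, and the inhomogeneity `I` is exactly what is left of `A Q`;
so `A = K (P V) + I Q` is a ring identity. Applied with `A = λ P 𝓛(t) U(t)` and `V = U(t)`, and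
composed with the derivative `U'(t) = λ 𝓛(t) U(t)`, it gives the derivative of `P (U(s) ρ₀)`.
-/

theorem HasDerivAt.clm_comp_apply {𝕜 E F H : Type*} [NontriviallyNormedField 𝕜]
    [NormedAlgebra ℝ 𝕜] [NormedAddCommGroup E] [NormedSpace 𝕜 E]
    [NormedAddCommGroup F] [NormedSpace 𝕜 F] [NormedSpace ℝ F] [IsScalarTower ℝ 𝕜 F]
    [NormedAddCommGroup H] [NormedSpace 𝕜 H] [NormedSpace ℝ H] [IsScalarTower ℝ 𝕜 H]
    {U : ℝ → E →L[𝕜] F} {U' : E →L[𝕜] F} {t : ℝ} (hU : HasDerivAt U U' t)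
    (P : F →L[𝕜] H) (x : E) :
    HasDerivAt (fun s => P (U s x)) (P (U' x)) t :=
  ((P.comp (ContinuousLinearMap.apply 𝕜 F x)).restrictScalars ℝ).hasFDerivAt.comp_hasDerivAt t hU

theorem tcl_decomposition {R : Type*} [Ring R] {P Q V G A K I : R} (hP : P * P = P)
    (hQ : Q = 1 - P) (hG : G * (P * V * P) = P) (hK : K = A * P * G)
    (hI : I = A * Q - K * (P * V * Q)) :
    A = K * (P * V) + I * Q := by
  have hPQ : P + Q = 1 := by rw [hQ, add_sub_cancel]
  have hQQ : Q * Q = Q := by rw [hQ]; noncomm_ring; rw [hP]; abel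
  have hKP : K * (P * V * P) = A * P := by rw [hK, mul_assoc, hG, mul_assoc, hP]
  have hIQ : I * Q = A * Q - K * (P * V * Q) := by
    rw [hI, sub_mul, mul_assoc A, hQQ, mul_assoc K, mul_assoc (P * V), hQQ]
  calc A = A * P + A * Q := by rw [← mul_add, hPQ, mul_one]
    _ = K * (P * V * P) + K * (P * V * Q) + (A * Q - K * (P * V * Q)) := by rw [hKP]; abel
    _ = K * (P * V) + I * Q := by rw [← mul_add, ← mul_add, hPQ, mul_one, hIQ]

theorem stmt3_general (n : ℕ)
    (𝓛 : ℝ → (Matrix (Fin n) (Fin n) ℂ →L[ℂ] Matrix (Fin n) (Fin n) ℂ))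
    (lam : ℝ)
    (U : ℝ → (Matrix (Fin n) (Fin n) ℂ →L[ℂ] Matrix (Fin n) (Fin n) ℂ))
    (hU : ∀ t, HasDerivAt U (lam • (𝓛 t * U t)) t)
    (P : Matrix (Fin n) (Fin n) ℂ →L[ℂ] Matrix (Fin n) (Fin n) ℂ)
    (hP : P * P = P)
    (Q : Matrix (Fin n) (Fin n) ℂ →L[ℂ] Matrix (Fin n) (Fin n) ℂ)
    (hQ : Q = 1 - P)
    (t : ℝ)
    (G : Matrix (Fin n) (Fin n) ℂ →L[ℂ] Matrix (Fin n) (Fin n) ℂ)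
    (hG1 : G * (P * U t * P) = P)
    (K I : Matrix (Fin n) (Fin n) ℂ →L[ℂ] Matrix (Fin n) (Fin n) ℂ)
    (hK : K = lam • ((P * 𝓛 t * U t * P) * G))
    (hI : I = lam • (P * 𝓛 t * U t * Q) - K * (P * U t * Q)) :
    lam • (P * 𝓛 t * U t) = K * (P * U t) + I * Q ∧
      ∀ ρ₀ : Matrix (Fin n) (Fin n) ℂ,
        HasDerivAt (fun s => P (U s ρ₀)) (K (P (U t ρ₀)) + I (Q ρ₀)) t := by
  have hsplit : lam • (P * 𝓛 t * U t) = K * (P * U t) + I * Q :=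
    tcl_decomposition hP hQ hG1 (by rw [hK, smul_mul_assoc, smul_mul_assoc])
      (by rw [hI, smul_mul_assoc])
  refine ⟨hsplit, fun ρ₀ => ?_⟩
  have hderiv : P ((lam • (𝓛 t * U t)) ρ₀) = K (P (U t ρ₀)) + I (Q ρ₀) := by
    simpa [mul_assoc] using congrArg (fun A => A ρ₀) hsplit
  exact hderiv ▸ (hU t).clm_comp_apply P ρ₀

/-- the time-convolutionless splitting of the projected propagator.
If `U' = λ 𝓛(t) U`, `U(t_0) = 1`, `P` is idempotent, `Q = 1 - P`, and `G` is a
pseudoinverse of `P U(t) P` (i.e. `G (P U(t) P) = P`, `G Q = 0`, `Q G = 0`), then with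
`K = λ (P 𝓛(t) U(t) P) G` and `I = λ P 𝓛(t) U(t) Q - K (P U(t) Q)` one has
`λ P 𝓛(t) U(t) = K (P U(t)) + I Q`; consequently `s ↦ P(U(s)ρ_0)` has derivative
`K(P(U(t)ρ_0)) + I(Q ρ_0)` at `t`. -/
theorem stmt3 (n : ℕ)
    (𝓛 : ℝ → (Matrix (Fin n) (Fin n) ℂ →L[ℂ] Matrix (Fin n) (Fin n) ℂ))
    (hcont : Continuous 𝓛) (lam : ℝ) (t₀ : ℝ)
    (U : ℝ → (Matrix (Fin n) (Fin n) ℂ →L[ℂ] Matrix (Fin n) (Fin n) ℂ))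
    (hU0 : U t₀ = 1)
    (hU : ∀ t, HasDerivAt U (lam • (𝓛 t * U t)) t)
    (P : Matrix (Fin n) (Fin n) ℂ →L[ℂ] Matrix (Fin n) (Fin n) ℂ)
    (hP : P * P = P)
    (Q : Matrix (Fin n) (Fin n) ℂ →L[ℂ] Matrix (Fin n) (Fin n) ℂ)
    (hQ : Q = 1 - P)
    (t : ℝ)
    (G : Matrix (Fin n) (Fin n) ℂ →L[ℂ] Matrix (Fin n) (Fin n) ℂ)
    (hG1 : G * (P * U t * P) = P) (hG2 : G * Q = 0) (hG3 : Q * G = 0)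
    (K I : Matrix (Fin n) (Fin n) ℂ →L[ℂ] Matrix (Fin n) (Fin n) ℂ)
    (hK : K = lam • ((P * 𝓛 t * U t * P) * G))
    (hI : I = lam • (P * 𝓛 t * U t * Q) - K * (P * U t * Q)) :
    lam • (P * 𝓛 t * U t) = K * (P * U t) + I * Q ∧
      ∀ ρ₀ : Matrix (Fin n) (Fin n) ℂ,
        HasDerivAt (fun s => P (U s ρ₀)) (K (P (U t ρ₀)) + I (Q ρ₀)) t :=
  stmt3_general n 𝓛 lam U hU P hP Q hQ t G hG1 K I hK hI
end

section
/- Let R be a (not necessarily commutative) ring, and let (a_k)_{k≥1} and (b_k)_{k≥1} be sequences in R; set b_0 := 1. For n ≥ 1 define K_n := Σ_{q=0}^{n−1} (−1)^q Σ_{(k_0,k_1,…,k_q)} a_{k_0} b_{k_1} ⋯ b_{k_q}, where the inner sum runs over all compositions (k_0,…,k_q) of n into q+1 positive parts. Then for every n ≥ 1 one has a_n = Σ_{m=0}^{n−1} K_{n−m} b_m. -/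
open Finset

private def Cc {R : Type*} [Ring R] (a b : ℕ → R) : ℕ → ℕ → R
  | 0, n => if n = 0 then 0 else a n
  | q + 1, n => ∑ m ∈ Finset.Ico 1 n, Cc a b q (n - m) * b m

private lemma Cc_eq_zero {R : Type*} [Ring R] (a b : ℕ → R) :
    ∀ q n, n ≤ q → Cc a b q n = 0
  | 0, n, h => by
    have : n = 0 := Nat.le_zero.mp h
    simp [Cc, this]
  | q + 1, n, h => by
    rw [Cc]
    refine Finset.sum_eq_zero fun m hm => ?_
    rw [Finset.mem_Ico] at hm
    rw [Cc_eq_zero a b q (n - m) (by omega)]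
    simp

private lemma S_eq_Cc {R : Type*} [Ring R] (a b : ℕ → R) (q : ℕ) : ∀ n,
    (∑ k ∈ Finset.univ.filter
        (fun k : Fin (q + 1) → Fin (n + 1) =>
          (∀ j, 1 ≤ (k j : ℕ)) ∧ ∑ j, (k j : ℕ) = n),
      a ((k 0 : ℕ)) * (List.ofFn (fun j : Fin q => b ((k j.succ : ℕ)))).prod)
    = Cc a b q n := by
  induction q with
  | zero =>
    intro n
    rw [Finset.sum_filter]
    rw [Fintype.sum_equiv (Equiv.funUnique (Fin 1) (Fin (n + 1)))
        _ (fun i : Fin (n + 1) => if 1 ≤ (i : ℕ) ∧ (i : ℕ) = n then a (i : ℕ) * 1 else 0)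
        (fun k => by
          simp [Equiv.funUnique, Fin.forall_fin_one, Fin.sum_univ_one])]
    rw [Fin.sum_univ_eq_sum_range (fun i : ℕ => if 1 ≤ i ∧ i = n then a i * 1 else 0) (n + 1)]
    rcases Nat.eq_zero_or_pos n with hn | hn
    · subst hn
      simp [Cc]
    · have hcond : ∀ i ∈ Finset.range (n + 1),
          (if 1 ≤ i ∧ i = n then a i * 1 else 0) = if i = n then a i else 0 := by
        intro i _
        by_cases h : i = n
        · subst h; rw [if_pos rfl, if_pos ⟨hn, rfl⟩, mul_one]
        · rw [if_neg h, if_neg (fun hc => h hc.2)]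
      rw [Finset.sum_congr rfl hcond, Finset.sum_ite_eq' (Finset.range (n + 1)) n a,
        if_pos (Finset.self_mem_range_succ n)]
      have hn0 : n ≠ 0 := by omega
      simp [Cc, hn0]
  | succ q IH =>
    intro n
    -- RHS: Cc (q+1) n = Σ_{m ∈ Ico 1 n} Cc q (n-m) * b m
    rw [Cc]
    have : ∀ m ∈ Finset.Ico 1 n, Cc a b q (n - m) * b m =
        ∑ k ∈ Finset.univ.filter
          (fun k : Fin (q + 1) → Fin (n - m + 1) =>
            (∀ j, 1 ≤ (k j : ℕ)) ∧ ∑ j, (k j : ℕ) = n - m),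
          (a ((k 0 : ℕ)) * (List.ofFn (fun j : Fin q => b ((k j.succ : ℕ)))).prod) * b m := by
      intro m _
      rw [← Finset.sum_mul, IH (n - m)]
    rw [Finset.sum_congr rfl this, Finset.sum_sigma']
    -- bound lemma for the forward map
    have bnd : ∀ k : Fin (q + 1 + 1) → Fin (n + 1),
        k ∈ Finset.univ.filter (fun k : Fin (q + 1 + 1) → Fin (n + 1) =>
          (∀ j, 1 ≤ (k j : ℕ)) ∧ ∑ j, (k j : ℕ) = n) →
        ∀ j : Fin (q + 1),
          (k j.castSucc : ℕ) < n - (k (Fin.last (q + 1)) : ℕ) + 1 := by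
      intro k hk j
      rw [Finset.mem_filter] at hk
      obtain ⟨-, h1, h2⟩ := hk
      rw [Fin.sum_univ_castSucc] at h2
      have hle : (k j.castSucc : ℕ) ≤ ∑ i : Fin (q + 1), (k i.castSucc : ℕ) :=
        Finset.single_le_sum (f := fun i : Fin (q + 1) => (k i.castSucc : ℕ))
          (fun i _ => Nat.zero_le _) (Finset.mem_univ j)
      omega
    have hm_lt : ∀ p : (m : ℕ) × (Fin (q + 1) → Fin (n - m + 1)),
        p ∈ (Finset.Ico 1 n).sigma (fun m => Finset.univ.filter
          (fun k : Fin (q + 1) → Fin (n - m + 1) =>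
            (∀ j, 1 ≤ (k j : ℕ)) ∧ ∑ j, (k j : ℕ) = n - m)) → p.1 < n + 1 := by
      intro p hp
      rw [Finset.mem_sigma, Finset.mem_Ico] at hp
      omega
    have sig_ext : ∀ {m m' : ℕ} (f : Fin (q + 1) → Fin (n - m + 1))
        (f' : Fin (q + 1) → Fin (n - m' + 1)), m = m' → (∀ j, (f j : ℕ) = (f' j : ℕ)) →
        (⟨m, f⟩ : (m : ℕ) × (Fin (q + 1) → Fin (n - m + 1))) = ⟨m', f'⟩ := by
      intro m m' f f' h h2
      subst h
      congr 1
      funext j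
      exact Fin.ext (h2 j)
    refine Finset.sum_bij'
      (fun k hk => ⟨(k (Fin.last (q + 1)) : ℕ),
        fun j => ⟨(k j.castSucc : ℕ), bnd k hk j⟩⟩)
      (fun p hp => Fin.snoc
        (fun i => ⟨(p.2 i : ℕ),
          Nat.lt_of_lt_of_le (p.2 i).isLt (Nat.succ_le_succ (Nat.sub_le n p.1))⟩)
        ⟨p.1, hm_lt p hp⟩)
      ?_ ?_ ?_ ?_ ?_
    · -- forward membership
      intro k hk
      have hb := bnd k hk
      rw [Finset.mem_filter] at hk
      obtain ⟨-, h1, h2⟩ := hk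
      rw [Fin.sum_univ_castSucc] at h2
      rw [Finset.mem_sigma, Finset.mem_Ico]
      have h00 : (1 : ℕ) ≤ (k ((0 : Fin (q + 1)).castSucc) : ℕ) := by
        rw [Fin.castSucc_zero]; exact h1 0
      have hle : (k ((0 : Fin (q + 1)).castSucc) : ℕ) ≤ ∑ i : Fin (q + 1), (k i.castSucc : ℕ) :=
        Finset.single_le_sum (f := fun i : Fin (q + 1) => (k i.castSucc : ℕ))
          (fun i _ => Nat.zero_le _) (Finset.mem_univ _)
      have hmlt : (k (Fin.last (q + 1)) : ℕ) < n := by omega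
      refine ⟨⟨h1 (Fin.last (q + 1)), hmlt⟩, ?_⟩
      rw [Finset.mem_filter]
      refine ⟨Finset.mem_univ _, fun j => h1 j.castSucc, ?_⟩
      simp only [Fin.val_mk]
      omega
    · -- backward membership
      intro p hp
      have hp' := hp
      rw [Finset.mem_sigma, Finset.mem_Ico] at hp'
      obtain ⟨⟨hm1, hmn⟩, hk'⟩ := hp'
      rw [Finset.mem_filter] at hk'
      obtain ⟨-, h1, h2⟩ := hk'
      rw [Finset.mem_filter]
      refine ⟨Finset.mem_univ _, fun j => ?_, ?_⟩
      · refine Fin.lastCases ?_ (fun i => ?_) j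
        · simp only [Fin.snoc_last]; exact hm1
        · simp only [Fin.snoc_castSucc]; exact h1 i
      · rw [Fin.sum_univ_castSucc]
        simp only [Fin.snoc_last, Fin.snoc_castSucc, Fin.val_mk]
        omega
    · -- left inverse
      intro k hk
      funext j
      refine Fin.lastCases ?_ (fun i => ?_) j
      · simp
      · simp
    · -- right inverse
      intro p hp
      rcases p with ⟨m, f⟩
      refine sig_ext _ _ ?_ ?_
      · simp [Fin.snoc_last]
      · intro j
        simp [Fin.snoc_castSucc]
    · -- value equality
      intro k hk
      rw [List.ofFn_succ', List.prod_concat, ← mul_assoc]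
      simp only [Fin.val_mk, Fin.succ_castSucc, Fin.succ_last, Fin.castSucc_zero]

/-- With `b_0 = 1` and
`K_n = Σ_{q=0}^{n-1} (-1)^q Σ_{compositions (k_0,…,k_q) of n} a_{k_0} b_{k_1} ⋯ b_{k_q}`,
one has `a_n = Σ_{m=0}^{n-1} K_{n-m} b_m` for all `n ≥ 1`. -/
theorem stmt4 (R : Type*) [Ring R] (a b K : ℕ → R)
    (hb0 : b 0 = 1)
    (hK : ∀ n, 1 ≤ n → K n =
      ∑ q ∈ Finset.range n, (-1 : R) ^ q *
        ∑ k ∈ Finset.univ.filter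
            (fun k : Fin (q + 1) → Fin (n + 1) =>
              (∀ j, 1 ≤ (k j : ℕ)) ∧ ∑ j, (k j : ℕ) = n),
          a ((k 0 : ℕ)) * (List.ofFn (fun j : Fin q => b ((k j.succ : ℕ)))).prod) :
    ∀ n, 1 ≤ n → a n = ∑ m ∈ Finset.range n, K (n - m) * b m := by
  have hK' : ∀ n, 1 ≤ n → K n = ∑ q ∈ Finset.range n, (-1 : R) ^ q * Cc a b q n := by
    intro n hn
    rw [hK n hn]
    exact Finset.sum_congr rfl fun q _ => by rw [S_eq_Cc]
  intro n hn
  -- split off m = 0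
  obtain ⟨n', rfl⟩ : ∃ n', n = n' + 1 := ⟨n - 1, by omega⟩
  rw [Finset.sum_range_succ']
  simp only [Nat.sub_zero, hb0, mul_one]
  have h1 : ∀ i ∈ Finset.range n', K (n' + 1 - (i + 1)) * b (i + 1)
      = (∑ q ∈ Finset.range (n' + 1), (-1 : R) ^ q * Cc a b q (n' - i)) * b (i + 1) := by
    intro i hi
    rw [Finset.mem_range] at hi
    have h2 : n' + 1 - (i + 1) = n' - i := by omega
    rw [h2, hK' (n' - i) (by omega)]
    congr 1
    -- extend range (n' - i) to range (n' + 1) using Cc_eq_zero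
    rw [← Finset.sum_range_add_sum_Ico _ (show n' - i ≤ n' + 1 by omega)]
    have : ∀ q ∈ Finset.Ico (n' - i) (n' + 1), (-1 : R) ^ q * Cc a b q (n' - i) = 0 := by
      intro q hq
      rw [Finset.mem_Ico] at hq
      rw [Cc_eq_zero a b q (n' - i) (by omega), mul_zero]
    rw [Finset.sum_congr rfl this, Finset.sum_const_zero, add_zero]
  rw [Finset.sum_congr rfl h1]
  simp only [Finset.sum_mul]
  rw [Finset.sum_comm]
  have h3 : ∀ q ∈ Finset.range (n' + 1),
      ∑ i ∈ Finset.range n', (-1 : R) ^ q * Cc a b q (n' - i) * b (i + 1)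
      = (-1 : R) ^ q * Cc a b (q + 1) (n' + 1) := by
    intro q _
    rw [Cc]
    rw [Finset.sum_Ico_eq_sum_range]
    simp only [Nat.add_sub_cancel, Finset.mul_sum]
    refine Finset.sum_congr rfl fun i _ => ?_
    have : n' + 1 - (1 + i) = n' - i := by omega
    rw [this, Nat.add_comm 1 i, mul_assoc]
  rw [Finset.sum_congr rfl h3, hK' (n' + 1) (by omega), ← Finset.sum_add_distrib]
  have h4 : ∀ q ∈ Finset.range (n' + 1),
      (-1 : R) ^ q * Cc a b (q + 1) (n' + 1) + (-1 : R) ^ q * Cc a b q (n' + 1)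
      = ((-1 : R) ^ q * Cc a b q (n' + 1)) - ((-1 : R) ^ (q + 1) * Cc a b (q + 1) (n' + 1)) := by
    intro q _
    rw [pow_succ]
    noncomm_ring
  rw [Finset.sum_congr rfl h4, Finset.sum_range_sub']
  rw [Cc_eq_zero a b (n' + 1) (n' + 1) le_rfl]
  simp [Cc]
end
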